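/- The function h(r) := 2·e^{2r}·E(4r) − E(2r) is strictly positive and strictly decreasing on (0,∞); indeed its derivative satisfies h'(r) = −e^{2r}·∫_r^∞ e^{−4s}·s^{−2} ds < 0 for all r > 0. -/

import Mathlib

open Real Set Filter MeasureTheory

/-- `E x = ∫_x^∞ e^{-t}/t dt`, so that `Ei(-x) = -E x` for `x > 0`. -/
noncomputable def expInt (x : ℝ) : ℝ := ∫ t in Set.Ioi x, Real.exp (-t) / t

/-- `h(r) = 2 e^{2r} E(4r) - E(2r) = -r e^{r} g(r)`. -/
noncomputable def hfun (r : ℝ) : ℝ := 2 * Real.exp (2 * r) * expInt (4 * r) - expInt (2 * r)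

/-!
Differentiating the tail integrals gives `h'(r) = 4 e^{2r} E(4r) - e^{-2r}/r`, and integrating by
parts against the antiderivative `-e^{-4s}/s + 4 E(4s)` of `e^{-4s}/s²` turns this into
`-e^{2r} ∫_r^∞ e^{-4s}/s² ds < 0`. The bound `E(x) ≤ e^{-x}/x` gives `h(r) → 0` as `r → ∞`,
so the strictly decreasing `h` is positive.
-/

open Topology

theorem StrictAntiOn.lt_of_tendsto_atTop {α β : Type*} [LinearOrder α] [NoMaxOrder α]
    [Preorder β] [TopologicalSpace β] [OrderClosedTopology β] {f : α → β} {a x : α} {l : β}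
    (hf : StrictAntiOn f (Ioi a)) (hlim : Tendsto f atTop (𝓝 l)) (hx : a < x) : l < f x := by
  have : Nonempty α := ⟨a⟩
  obtain ⟨y, hxy⟩ := exists_gt x
  have hly : l ≤ f y := le_of_tendsto hlim <| (eventually_gt_atTop y).mono fun s hys =>
    (hf (hx.trans hxy) (hx.trans (hxy.trans hys)) hys).le
  exact hly.trans_lt (hf hx (hx.trans hxy) hxy)

theorem integrableOn_exp_neg_mul_div_pow {c x : ℝ} (hc : 0 < c) (hx : 0 < x) (n : ℕ) :
    IntegrableOn (fun t => exp (-(c * t)) / t ^ n) (Ioi x) := by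
  have hdom : IntegrableOn (fun t => exp (-(c * t)) / x ^ n) (Ioi x) := by
    simpa only [neg_mul, IntegrableOn] using (exp_neg_integrableOn_Ioi x hc).div_const (x ^ n)
  refine hdom.mono' ?_ ?_
  · exact (ContinuousOn.div (by fun_prop) (by fun_prop) fun t ht =>
      pow_ne_zero n (hx.trans ht).ne').aestronglyMeasurable measurableSet_Ioi
  · filter_upwards [ae_restrict_mem measurableSet_Ioi] with t ht
    have ht0 : 0 < t := hx.trans ht
    rw [norm_of_nonneg (by positivity)]
    exact div_le_div_of_nonneg_left (exp_pos _).le (by positivity)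
      (pow_le_pow_left₀ hx.le (le_of_lt ht) n)

theorem integrableOn_exp_neg_div {x : ℝ} (hx : 0 < x) :
    IntegrableOn (fun t => exp (-t) / t) (Ioi x) := by
  simpa using integrableOn_exp_neg_mul_div_pow one_pos hx 1

theorem expInt_nonneg {x : ℝ} (hx : 0 < x) : 0 ≤ expInt x :=
  setIntegral_nonneg measurableSet_Ioi fun t ht => by
    have : 0 < t := hx.trans ht
    positivity

theorem expInt_le_exp_neg_div {x : ℝ} (hx : 0 < x) : expInt x ≤ exp (-x) / x := by
  calc expInt x ≤ ∫ t in Ioi x, exp (-t) / x :=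
        setIntegral_mono_on (integrableOn_exp_neg_div hx)
          ((integrableOn_exp_neg_Ioi x).div_const x) measurableSet_Ioi
          fun t ht => div_le_div_of_nonneg_left (exp_pos _).le hx (le_of_lt ht)
    _ = exp (-x) / x := by rw [integral_div, integral_exp_neg_Ioi]

theorem tendsto_expInt_atTop : Tendsto expInt atTop (𝓝 0) := by
  have hbound : Tendsto (fun x => exp (-x) / x) atTop (𝓝 0) :=
    tendsto_exp_neg_atTop_nhds_zero.div_atTop tendsto_id
  refine squeeze_zero' ?_ ?_ hbound
  · filter_upwards [eventually_gt_atTop 0] with x hx using expInt_nonneg hx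
  · filter_upwards [eventually_gt_atTop 0] with x hx using expInt_le_exp_neg_div hx

theorem hasDerivAt_expInt {x : ℝ} (hx : 0 < x) : HasDerivAt expInt (-(exp (-x) / x)) x := by
  set f : ℝ → ℝ := fun t => exp (-t) / t
  have ha : 0 < x / 2 := by positivity
  have hax : x / 2 < x := by linarith
  have hloc : (fun y => expInt (x / 2) - ∫ t in x / 2..y, f t) =ᶠ[𝓝 x] expInt := by
    filter_upwards [Ioi_mem_nhds hax] with y hy
    rw [← intervalIntegral.integral_Ioi_sub_Ioi (integrableOn_exp_neg_div ha) (le_of_lt hy)]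
    simp only [expInt, sub_sub_cancel]
  have hint : IntervalIntegrable f volume (x / 2) x :=
    (intervalIntegrable_iff_integrableOn_Ioc_of_le hax.le).2
      ((integrableOn_exp_neg_div ha).mono_set Ioc_subset_Ioi_self)
  have hcont : ContinuousOn f (Ioi 0) :=
    ContinuousOn.div (by fun_prop) continuousOn_id fun t ht => ne_of_gt ht
  have hderiv := intervalIntegral.integral_hasDerivAt_right hint
    (hcont.stronglyMeasurableAtFilter isOpen_Ioi x hx) (hcont.continuousAt (Ioi_mem_nhds hx))
  exact (hderiv.const_sub (expInt (x / 2))).congr_of_eventuallyEq hloc.symm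

theorem hasDerivAt_expInt_const_mul {c r : ℝ} (hc : 0 < c) (hr : 0 < r) :
    HasDerivAt (fun r => expInt (c * r)) (-(exp (-(c * r)) / r)) r := by
  refine ((hasDerivAt_expInt (mul_pos hc hr)).comp r
    ((hasDerivAt_id' r).const_mul c)).congr_deriv ?_
  field_simp

theorem integral_exp_neg_mul_div_sq {c x : ℝ} (hc : 0 < c) (hx : 0 < x) :
    ∫ s in Ioi x, exp (-(c * s)) / s ^ 2 = exp (-(c * x)) / x - c * expInt (c * x) := by
  set G : ℝ → ℝ := fun s => -(exp (-(c * s)) / s) + c * expInt (c * s)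
  have hG : ∀ s ∈ Ici x, HasDerivAt G (exp (-(c * s)) / s ^ 2) s := by
    intro s hs
    have hs0 : 0 < s := hx.trans_le hs
    have hexp : HasDerivAt (fun s => exp (-(c * s))) (-c * exp (-(c * s))) s := by
      simpa [mul_comm] using ((hasDerivAt_id' s).const_mul c).neg.exp
    refine ((hexp.div (hasDerivAt_id' s) hs0.ne').neg.add
      ((hasDerivAt_expInt_const_mul hc hs0).const_mul c)).congr_deriv ?_
    field_simp
    ring
  have hGlim : Tendsto G atTop (𝓝 0) := by
    have hcs : Tendsto (fun s => c * s) atTop atTop := tendsto_id.const_mul_atTop hc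
    have h₁ : Tendsto (fun s => exp (-(c * s)) / s) atTop (𝓝 0) :=
      (tendsto_exp_neg_atTop_nhds_zero.comp hcs).div_atTop tendsto_id
    simpa using h₁.neg.add ((tendsto_expInt_atTop.comp hcs).const_mul c)
  rw [integral_Ioi_of_hasDerivAt_of_tendsto' hG
    (integrableOn_exp_neg_mul_div_pow hc hx 2) hGlim]
  simp only [G]
  ring

theorem integral_exp_neg_mul_div_sq_pos {c x : ℝ} (hc : 0 < c) (hx : 0 < x) :
    0 < ∫ s in Ioi x, exp (-(c * s)) / s ^ 2 := by
  have hpos : ∀ s ∈ Ioi x, 0 < exp (-(c * s)) / s ^ 2 := fun s hs => by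
    have : 0 < s := hx.trans hs
    positivity
  rw [setIntegral_pos_iff_support_of_nonneg_ae
    ((ae_restrict_mem measurableSet_Ioi).mono fun s hs => (hpos s hs).le)
    (integrableOn_exp_neg_mul_div_pow hc hx 2)]
  calc (0 : ENNReal) < volume (Ioi x) := by simp
    _ ≤ volume (Function.support _ ∩ Ioi x) :=
      measure_mono fun s hs => ⟨(hpos s hs).ne', hs⟩

theorem hasDerivAt_hfun {r : ℝ} (hr : 0 < r) :
    HasDerivAt hfun (-(exp (2 * r) * ∫ s in Ioi r, exp (-4 * s) / s ^ 2)) r := by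
  have hexp := (((hasDerivAt_id' r).const_mul 2).exp).const_mul 2
  refine ((hexp.mul (hasDerivAt_expInt_const_mul four_pos hr)).sub
    (hasDerivAt_expInt_const_mul two_pos hr)).congr_deriv ?_
  simp only [neg_mul]
  rw [integral_exp_neg_mul_div_sq four_pos hr]
  have hexp_add : exp (2 * r) * (exp (-(4 * r)) / r) = exp (-(2 * r)) / r := by
    rw [mul_div_assoc', ← exp_add]; ring_nf
  linear_combination (-1) * hexp_add

theorem tendsto_hfun_atTop : Tendsto hfun atTop (𝓝 0) := by
  have h₂ : Tendsto (fun r => expInt (2 * r)) atTop (𝓝 0) :=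
    tendsto_expInt_atTop.comp (tendsto_id.const_mul_atTop two_pos)
  have h₄ : Tendsto (fun r => exp (2 * r) * expInt (4 * r)) atTop (𝓝 0) := by
    refine squeeze_zero' ?_ ?_ ((tendsto_exp_neg_atTop_nhds_zero.comp
      (tendsto_id.const_mul_atTop two_pos)).div_atTop (tendsto_id.const_mul_atTop four_pos))
    · filter_upwards [eventually_gt_atTop 0] with r hr
      exact mul_nonneg (exp_pos _).le (expInt_nonneg (by positivity))
    · filter_upwards [eventually_gt_atTop 0] with r hr
      calc exp (2 * r) * expInt (4 * r) ≤ exp (2 * r) * (exp (-(4 * r)) / (4 * r)) :=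
            mul_le_mul_of_nonneg_left (expInt_le_exp_neg_div (by positivity)) (exp_pos _).le
        _ = exp (-(2 * r)) / (4 * r) := by rw [mul_div_assoc', ← exp_add]; ring_nf
  have h := (h₄.const_mul 2).sub h₂
  rw [mul_zero, sub_zero] at h
  exact h.congr fun r => by rw [hfun, mul_assoc]

/-- `h` is strictly positive and strictly decreasing on `(0,∞)`; indeed its derivative is
`h'(r) = -e^{2r} ∫_r^∞ e^{-4s} s^{-2} ds < 0`. -/
theorem hfun_pos_strictAnti :
    (∀ r > (0:ℝ), 0 < hfun r) ∧ StrictAntiOn hfun (Set.Ioi 0) ∧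
    ∀ r > (0:ℝ),
      deriv hfun r = -(Real.exp (2 * r) * ∫ s in Set.Ioi r, Real.exp (-4 * s) / s ^ 2) ∧
      deriv hfun r < 0 := by
  have hderiv_neg : ∀ r > (0:ℝ), deriv hfun r < 0 := fun r hr => by
    rw [(hasDerivAt_hfun hr).deriv, neg_lt_zero]
    simpa only [neg_mul] using
      mul_pos (exp_pos _) (integral_exp_neg_mul_div_sq_pos four_pos hr)
  have hanti : StrictAntiOn hfun (Ioi 0) :=
    strictAntiOn_of_deriv_neg (convex_Ioi 0)
      (fun r hr => (hasDerivAt_hfun hr).continuousAt.continuousWithinAt)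
      (fun r hr => hderiv_neg r (by rwa [interior_Ioi] at hr))
  exact ⟨fun r hr => hanti.lt_of_tendsto_atTop tendsto_hfun_atTop hr, hanti,
    fun r hr => ⟨(hasDerivAt_hfun hr).deriv, hderiv_neg r hr⟩⟩
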